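/- Let $H$ be a Banach space and let $U : [-\bar\tau, \infty) \to H$ be a continuous solution of $U(t) = S(t)U_0 + \int_0^t S(t-s)[G(U(s)) + k(s) B U(s-\tau(s))] ds$ for $t \ge 0$ with $U = f$ on $[-\bar\tau, 0]$, where $\|S(t)\| \le M e^{-\omega t}$, $B$ bounded, $G$ is $L$-Lipschitz with $G(0)=0$ and $L < (\omega - \omega')/M$, $\tau(t) \in [0,\bar\tau]$, $\int_{t-\bar\tau}^t |k| \le K$ for all $t \ge 0$, and $M\|B\| e^{\omega\bar\tau} \int_0^t |k(s)| ds \le \gamma + \omega' t$ with $0 \le \omega' < \omega$, $\gamma \ge 0$. Then $\|U(t)\| \le M e^{\gamma} \left( \|U_0\| + e^{\omega\bar\tau} K \|B\| \max_{s\in[-\bar\tau,0]} \{e^{\omega s}\|f(s)\|\} \right) e^{-(\omega - \omega' - ML)t}$ for all $t \ge 0$. -/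

import Mathlib

/-!
With `φ t = exp (ω t) ‖U t‖` and `m` its running supremum over `[0, t]`, the
variation-of-constants formula and `‖S t‖ ≤ M exp (-ω t)` give
`m r ≤ a + ∫₀ʳ (M L + M ‖B‖ exp (ω τ̄) |k|) m`. The delayed term is controlled by `m` once
`s - τ s ≥ 0`, and otherwise by the history, which can only happen for `s ≤ τ̄`; this is where
`∫₀^τ̄ |k| ≤ K` enters `a`. Grönwall's inequality then bounds `m t` by
`a exp (M L t + γ + ω' t)`, and multiplying by `exp (-ω t)` gives the decay.

Grönwall's inequality is proved for merely integrable `g`: the absolutely continuous function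
`(a + ∫₀ʳ g m) exp (-∫₀ʳ g)` has a.e. derivative `g exp (-∫₀ʳ g) (m - a - ∫₀ʳ g m) ≤ 0`.
-/

open Real Set MeasureTheory Filter

theorem LipschitzOnWith.comp_absolutelyContinuousOnInterval {X : Type*} [PseudoMetricSpace X]
    {Y : Type*} [PseudoMetricSpace Y] {φ : X → Y} {K : NNReal} {s : Set X} {f : ℝ → X} {a b : ℝ}
    (hφ : LipschitzOnWith K φ s) (hf : AbsolutelyContinuousOnInterval f a b)
    (hfs : MapsTo f (uIcc a b) s) : AbsolutelyContinuousOnInterval (φ ∘ f) a b := by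
  unfold AbsolutelyContinuousOnInterval at hf ⊢
  refine squeeze_zero' (Eventually.of_forall fun _ => Finset.sum_nonneg fun _ _ => dist_nonneg)
    ?_ (by simpa using hf.const_mul (K : ℝ))
  rw [eventually_inf_principal]
  filter_upwards with E hE
  rw [Finset.mul_sum]
  gcongr with i hi
  exact hφ.dist_le_mul _ (hfs (hE.1 i hi).1) _ (hfs (hE.1 i hi).2)

theorem Real.lipschitzOnWith_exp_Iic : LipschitzOnWith 1 exp (Iic 0) := by
  refine (convex_Iic 0).lipschitzOnWith_of_nnnorm_deriv_le (fun x _ => differentiableAt_exp)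
    fun x hx => ?_
  rw [Real.deriv_exp, ← NNReal.coe_le_coe, coe_nnnorm, Real.norm_of_nonneg (exp_nonneg x)]
  simpa using hx

theorem le_mul_exp_integral_of_le_add_integral {g m : ℝ → ℝ} {a t : ℝ} (ht : 0 ≤ t)
    (hg : ∀ s ∈ Icc 0 t, 0 ≤ g s) (hgi : IntervalIntegrable g volume 0 t)
    (hgm : IntervalIntegrable (fun s => g s * m s) volume 0 t)
    (hm : ∀ r ∈ Icc 0 t, m r ≤ a + ∫ s in 0..r, g s * m s) :
    m t ≤ a * exp (∫ s in 0..t, g s) := by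
  set R : ℝ → ℝ := fun r => a + ∫ s in 0..r, g s * m s
  set E : ℝ → ℝ := fun r => exp (-∫ s in 0..r, g s)
  have h0 : (0 : ℝ) ∈ uIcc 0 t := left_mem_uIcc
  have hR : AbsolutelyContinuousOnInterval R 0 t :=
    (LipschitzWith.const a).lipschitzOnWith.absolutelyContinuousOnInterval.fun_add
      (hgm.absolutelyContinuousOnInterval_intervalIntegral h0)
  have hE : AbsolutelyContinuousOnInterval E 0 t := by
    refine lipschitzOnWith_exp_Iic.comp_absolutelyContinuousOnInterval
      (hgi.absolutelyContinuousOnInterval_intervalIntegral h0).fun_neg fun r hr => ?_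
    rw [uIcc_of_le ht] at hr
    simpa using intervalIntegral.integral_nonneg hr.1 fun s hs => hg s ⟨hs.1, hs.2.trans hr.2⟩
  have hderiv : ∀ᵐ x, x ∈ Ioc 0 t → deriv (fun x => R x * E x) x ≤ 0 := by
    filter_upwards [hgi.ae_hasDerivAt_integral, hgm.ae_hasDerivAt_integral] with x hG hI hx
    have hx' : x ∈ uIcc 0 t := by rw [uIcc_of_le ht]; exact Ioc_subset_Icc_self hx
    have hRx : HasDerivAt R (g x * m x) x := (hI hx' 0 h0).const_add a
    have hEx : HasDerivAt E (E x * -g x) x := (hG hx' 0 h0).neg.exp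
    rw [(hRx.fun_mul hEx).deriv,
      show g x * m x * E x + R x * (E x * -g x) = g x * E x * (m x - R x) by ring]
    exact mul_nonpos_of_nonneg_of_nonpos (mul_nonneg (hg x (Ioc_subset_Icc_self hx))
      (exp_pos _).le) (sub_nonpos.2 (hm x (Ioc_subset_Icc_self hx)))
  have hRE : R t * E t ≤ a := by
    have hFTC := (hR.fun_mul hE).integral_deriv_eq_sub
    have hRE0 : R 0 * E 0 = a := by simp [R, E]
    rw [intervalIntegral.integral_of_le ht, hRE0] at hFTC
    linarith [setIntegral_nonpos_ae measurableSet_Ioc hderiv]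
  calc m t ≤ R t := hm t ⟨ht, le_rfl⟩
    _ = R t * E t * exp (∫ s in 0..t, g s) := by simp only [E, mul_assoc, ← exp_add]; simp
    _ ≤ a * exp (∫ s in 0..t, g s) := by gcongr

theorem IsCompact.le_biSup_of_continuousOn {α β : Type*} [TopologicalSpace α]
    [ConditionallyCompleteLinearOrder β] [TopologicalSpace β] [OrderTopology β]
    {g : α → β} {K : Set α} (hK : IsCompact K) (hg : ContinuousOn g K) {x : α} (hx : x ∈ K) :
    g x ≤ ⨆ y ∈ K, g y :=
  le_ciSup₂ (f := fun y (_ : y ∈ K) => g y)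
    ((hK.bddAbove_image hg).mono <|
      iUnion_subset fun _ => range_subset_iff.2 fun hy => mem_image_of_mem g hy) x hx

-- For `r < 0` this is `sSup ∅ = 0`.
noncomputable def runningSup (φ : ℝ → ℝ) (r : ℝ) : ℝ := sSup (φ '' Icc 0 r)

section runningSup

variable {φ : ℝ → ℝ}

theorem le_runningSup (hφ : ContinuousOn φ (Ici 0)) {r s : ℝ} (hr : 0 ≤ r) (hrs : r ≤ s) :
    φ r ≤ runningSup φ s :=
  le_csSup (isCompact_Icc.bddAbove_image (hφ.mono Icc_subset_Ici_self)) ⟨r, ⟨hr, hrs⟩, rfl⟩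

theorem runningSup_le {r c : ℝ} (hc : 0 ≤ c) (h : ∀ s ∈ Icc 0 r, φ s ≤ c) :
    runningSup φ r ≤ c :=
  Real.sSup_le (forall_mem_image.2 h) hc

theorem runningSup_nonneg (hφ : ContinuousOn φ (Ici 0)) (hφ0 : 0 ≤ φ 0) (r : ℝ) :
    0 ≤ runningSup φ r := by
  rcases le_or_gt 0 r with hr | hr
  · exact hφ0.trans (le_runningSup hφ le_rfl hr)
  · simp [runningSup, Icc_eq_empty_of_lt hr]

theorem monotone_runningSup (hφ : ContinuousOn φ (Ici 0)) (hφ0 : 0 ≤ φ 0) :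
    Monotone (runningSup φ) := by
  intro r s hrs
  rcases le_or_gt 0 r with hr | hr
  · exact runningSup_le (runningSup_nonneg hφ hφ0 s) fun u hu =>
      le_runningSup hφ hu.1 (hu.2.trans hrs)
  · simpa [runningSup, Icc_eq_empty_of_lt hr] using runningSup_nonneg hφ hφ0 s

end runningSup

theorem IntervalIntegrable.mul_monotone {f g : ℝ → ℝ} {a b : ℝ}
    (hf : IntervalIntegrable f volume a b) (hg : Monotone g) :
    IntervalIntegrable (fun x => f x * g x) volume a b := by
  rw [intervalIntegrable_iff] at hf ⊢
  refine hf.mul_bdd hg.measurable.aestronglyMeasurable (c := max |g (min a b)| |g (max a b)|) ?_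
  filter_upwards [ae_restrict_mem measurableSet_uIoc] with x hx
  exact abs_le_max_abs_abs (hg hx.1.le) (hg hx.2)

theorem intervalIntegral.integral_indicator_Icc_le {f : ℝ → ℝ} {b r : ℝ} (hb : 0 ≤ b)
    (hr : 0 ≤ r) (hf0 : ∀ x, 0 ≤ f x) (hf : IntervalIntegrable f volume 0 b) :
    ∫ x in 0..r, (Icc 0 b).indicator f x ≤ ∫ x in 0..b, f x := by
  rw [intervalIntegral.integral_of_le hr, intervalIntegral.integral_of_le hb,
    MeasureTheory.integral_indicator measurableSet_Icc, Measure.restrict_restrict measurableSet_Icc]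
  exact setIntegral_mono_set hf.1 (Eventually.of_forall hf0)
    (Eventually.of_forall fun x hx => ⟨hx.2.1, hx.1.2⟩)

theorem exp_mul_norm_le_of_eq_add_integral {E : Type*} [NormedAddCommGroup E] [NormedSpace ℝ E]
    {S : ℝ → E →L[ℝ] E} {M ω r : ℝ} {x u : E} {v : ℝ → E} {h : ℝ → ℝ}
    (hS : ∀ t ≥ (0:ℝ), ‖S t‖ ≤ M * exp (-ω * t)) (hr : 0 ≤ r)
    (hu : u = S r x + ∫ s in 0..r, S (r - s) (v s))
    (hv : ∀ s ∈ Ioc 0 r, M * (exp (ω * s) * ‖v s‖) ≤ h s)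
    (hh : IntervalIntegrable h volume 0 r) :
    exp (ω * r) * ‖u‖ ≤ M * ‖x‖ + ∫ s in 0..r, h s := by
  have hM : 0 ≤ M := by simpa using (norm_nonneg _).trans (hS 0 le_rfl)
  have hexp : ∀ s, exp (-ω * (r - s)) = exp (-(ω * r)) * exp (ω * s) := fun s => by
    rw [← exp_add]; ring_nf
  have hint : ‖∫ s in 0..r, S (r - s) (v s)‖ ≤ ∫ s in 0..r, exp (-(ω * r)) * h s := by
    refine intervalIntegral.norm_integral_le_of_norm_le hr
      (Eventually.of_forall fun s hs => ?_) (hh.const_mul _)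
    calc ‖S (r - s) (v s)‖ ≤ M * exp (-ω * (r - s)) * ‖v s‖ :=
          (S (r - s)).le_of_opNorm_le (hS _ (sub_nonneg.2 hs.2)) _
      _ = exp (-(ω * r)) * (M * (exp (ω * s) * ‖v s‖)) := by rw [hexp]; ring
      _ ≤ exp (-(ω * r)) * h s := by gcongr; exact hv s hs
  have hx : ‖S r x‖ ≤ M * exp (-ω * r) * ‖x‖ := (S r).le_of_opNorm_le (hS r hr) x
  rw [intervalIntegral.integral_const_mul] at hint
  calc exp (ω * r) * ‖u‖
      ≤ exp (ω * r) * (M * exp (-ω * r) * ‖x‖ + exp (-(ω * r)) * ∫ s in 0..r, h s) := by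
        rw [hu]; gcongr; exact (norm_add_le _ _).trans (add_le_add hx hint)
    _ = M * ‖x‖ + ∫ s in 0..r, h s := by
        rw [neg_mul, exp_neg]; field_simp

theorem abs_mul_exp_mul_norm_delay_le {H : Type*} [SeminormedAddCommGroup H] {U : ℝ → H}
    {k : ℝ → ℝ} {ω b F m s σ : ℝ} (hω : 0 ≤ ω) (hs : 0 ≤ s) (hσ : σ ∈ Icc 0 b)
    (hF : ∀ y ∈ Icc (-b) 0, exp (ω * y) * ‖U y‖ ≤ F)
    (hm : ∀ y ∈ Icc 0 s, exp (ω * y) * ‖U y‖ ≤ m) :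
    |k s| * (exp (ω * s) * ‖U (s - σ)‖) ≤
      exp (ω * b) * (|k s| * m + F * (Icc 0 b).indicator (fun y => |k y|) s) := by
  have hsplit : exp (ω * s) * ‖U (s - σ)‖ = exp (ω * σ) * (exp (ω * (s - σ)) * ‖U (s - σ)‖) := by
    rw [← mul_assoc, ← exp_add]; ring_nf
  have hσb : exp (ω * σ) ≤ exp (ω * b) := exp_le_exp.2 (by nlinarith [hσ.2])
  have hF0 : 0 ≤ F := (by positivity : (0:ℝ) ≤ exp (ω * 0) * ‖U 0‖).trans
    (hF 0 ⟨by linarith [hσ.1.trans hσ.2], le_rfl⟩)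
  have hm0 : 0 ≤ m := (by positivity : (0:ℝ) ≤ exp (ω * s) * ‖U s‖).trans (hm s ⟨hs, le_rfl⟩)
  rw [hsplit]
  rcases le_or_gt 0 (s - σ) with hpast | hhist
  · have hUpast := hm (s - σ) ⟨hpast, by linarith [hσ.1]⟩
    have hind0 : 0 ≤ F * (Icc 0 b).indicator (fun y => |k y|) s :=
      mul_nonneg hF0 (indicator_nonneg (fun y _ => abs_nonneg (k y)) s)
    calc |k s| * (exp (ω * σ) * (exp (ω * (s - σ)) * ‖U (s - σ)‖))
        ≤ |k s| * (exp (ω * b) * m) := by gcongr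
      _ ≤ _ := by nlinarith [abs_nonneg (k s), exp_pos (ω * b)]
  · have hUhist := hF (s - σ) ⟨by linarith [hσ.2], hhist.le⟩
    rw [indicator_of_mem (show s ∈ Icc 0 b from ⟨hs, by linarith [hσ.2]⟩)]
    calc |k s| * (exp (ω * σ) * (exp (ω * (s - σ)) * ‖U (s - σ)‖))
        ≤ |k s| * (exp (ω * b) * F) := by gcongr
      _ ≤ _ := by nlinarith [mul_nonneg (abs_nonneg (k s)) hm0, exp_pos (ω * b)]

theorem exp_mul_norm_forcing_le {H : Type*} [SeminormedAddCommGroup H] [NormedSpace ℝ H]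
    {U : ℝ → H} {G : H → H} {B : H →L[ℝ] H} {k : ℝ → ℝ} {L ω b F m s σ : ℝ}
    (hG : ∀ x y : H, ‖G x - G y‖ ≤ L * ‖x - y‖) (hG0 : G 0 = 0) (hL : 0 ≤ L)
    (hω : 0 ≤ ω) (hs : 0 ≤ s) (hσ : σ ∈ Icc 0 b)
    (hF : ∀ y ∈ Icc (-b) 0, exp (ω * y) * ‖U y‖ ≤ F)
    (hm : ∀ y ∈ Icc 0 s, exp (ω * y) * ‖U y‖ ≤ m) :
    exp (ω * s) * ‖G (U s) + k s • B (U (s - σ))‖ ≤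
      (L + ‖B‖ * exp (ω * b) * |k s|) * m +
        ‖B‖ * exp (ω * b) * F * (Icc 0 b).indicator (fun y => |k y|) s := by
  have hGU : ‖G (U s)‖ ≤ L * ‖U s‖ := by simpa [hG0] using hG (U s) 0
  have hBU : ‖k s • B (U (s - σ))‖ ≤ ‖B‖ * (|k s| * ‖U (s - σ)‖) := by
    rw [norm_smul, Real.norm_eq_abs, mul_left_comm]
    exact mul_le_mul_of_nonneg_left (B.le_opNorm _) (abs_nonneg _)
  have hUs := hm s ⟨hs, le_rfl⟩
  have hdelay := abs_mul_exp_mul_norm_delay_le (k := k) hω hs hσ hF hm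
  calc exp (ω * s) * ‖G (U s) + k s • B (U (s - σ))‖
      ≤ exp (ω * s) * (L * ‖U s‖ + ‖B‖ * (|k s| * ‖U (s - σ)‖)) := by
        gcongr; exact (norm_add_le _ _).trans (add_le_add hGU hBU)
    _ = L * (exp (ω * s) * ‖U s‖) + ‖B‖ * (|k s| * (exp (ω * s) * ‖U (s - σ)‖)) := by ring
    _ ≤ L * m + ‖B‖ * (exp (ω * b) *
          (|k s| * m + F * (Icc 0 b).indicator (fun y => |k y|) s)) := by
        gcongr
    _ = _ := by ring

theorem runningSup_le_add_integral {φ h : ℝ → ℝ} {a r : ℝ} (hr : 0 ≤ r) (hφ0 : 0 ≤ φ 0)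
    (hh : ∀ s, 0 ≤ h s) (hhi : IntervalIntegrable h volume 0 r)
    (hφ : ∀ s ∈ Icc 0 r, φ s ≤ a + ∫ u in 0..s, h u) :
    runningSup φ r ≤ a + ∫ u in 0..r, h u := by
  have hmono : ∀ s ∈ Icc 0 r, a + ∫ u in 0..s, h u ≤ a + ∫ u in 0..r, h u := fun s hs =>
    add_le_add le_rfl <|
      intervalIntegral.integral_mono_interval le_rfl hs.1 hs.2 (.of_forall hh) hhi
  refine runningSup_le ?_ fun s hs => (hφ s hs).trans (hmono s hs)
  exact hφ0.trans ((hφ 0 ⟨le_rfl, hr⟩).trans (hmono 0 ⟨le_rfl, hr⟩))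

theorem runningSup_le_mul_exp_integral {φ g : ℝ → ℝ} {a t : ℝ} (ht : 0 ≤ t)
    (hφ : ContinuousOn φ (Ici 0)) (hφ0 : 0 ≤ φ 0) (hg : ∀ s, 0 ≤ g s)
    (hgi : ∀ r, IntervalIntegrable g volume 0 r)
    (hφle : ∀ r ≥ 0, φ r ≤ a + ∫ s in 0..r, g s * runningSup φ s) :
    runningSup φ t ≤ a * exp (∫ s in 0..t, g s) := by
  have hgm : ∀ r, IntervalIntegrable (fun s => g s * runningSup φ s) volume 0 r := fun r =>
    (hgi r).mul_monotone (monotone_runningSup hφ hφ0)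
  exact le_mul_exp_integral_of_le_add_integral ht (fun s _ => hg s) (hgi t) (hgm t)
    fun r hr => runningSup_le_add_integral hr.1 hφ0
      (fun s => mul_nonneg (hg s) (runningSup_nonneg hφ hφ0 s)) (hgm r) fun s hs => hφle s hs.1

theorem exp_mul_norm_le_add_integral_runningSup {H : Type*} [NormedAddCommGroup H]
    [NormedSpace ℝ H] {M ω τb K L F : ℝ} {S : ℝ → H →L[ℝ] H} {B : H →L[ℝ] H} {G : H → H}
    {k τ : ℝ → ℝ} {U : ℝ → H} {x : H} (hM : 0 ≤ M) (hω : 0 ≤ ω) (hτb : 0 ≤ τb) (hL : 0 ≤ L)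
    (hS : ∀ t ≥ (0:ℝ), ‖S t‖ ≤ M * exp (-ω * t))
    (hG : ∀ x y : H, ‖G x - G y‖ ≤ L * ‖x - y‖) (hG0 : G 0 = 0)
    (hk : ∀ a b : ℝ, IntervalIntegrable k volume a b) (hkK : ∫ s in 0..τb, |k s| ≤ K)
    (hτ : ∀ t ≥ (0:ℝ), τ t ∈ Icc 0 τb) (hU : ContinuousOn U (Ici 0))
    (hF : ∀ y ∈ Icc (-τb) 0, exp (ω * y) * ‖U y‖ ≤ F)
    (hduh : ∀ t ≥ (0:ℝ),
      U t = S t x + ∫ s in 0..t, S (t - s) (G (U s) + k s • B (U (s - τ s))))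
    {r : ℝ} (hr : 0 ≤ r) :
    exp (ω * r) * ‖U r‖ ≤ M * (‖x‖ + exp (ω * τb) * K * ‖B‖ * F) +
      ∫ s in 0..r, (M * L + M * ‖B‖ * exp (ω * τb) * |k s|) *
        runningSup (fun y => exp (ω * y) * ‖U y‖) s := by
  set m := runningSup (fun y => exp (ω * y) * ‖U y‖)
  set c := M * ‖B‖ * exp (ω * τb)
  set ind := (Icc 0 τb).indicator fun y => |k y|
  have hφ : ContinuousOn (fun y => exp (ω * y) * ‖U y‖) (Ici 0) := by fun_prop
  have hF0 : 0 ≤ F := (by positivity : (0:ℝ) ≤ exp (ω * 0) * ‖U 0‖).trans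
    (hF 0 ⟨by linarith, le_rfl⟩)
  have hgm : IntervalIntegrable (fun s => (M * L + c * |k s|) * m s) volume 0 r :=
    (intervalIntegrable_const.add ((hk 0 r).abs.const_mul c)).mul_monotone
      (monotone_runningSup hφ (by positivity))
  have hind : IntervalIntegrable ind volume 0 r :=
    intervalIntegrable_iff.2 ((hk 0 r).abs.def'.indicator measurableSet_Icc)
  have hindK : ∫ s in 0..r, ind s ≤ K :=
    (intervalIntegral.integral_indicator_Icc_le hτb hr (fun y => abs_nonneg (k y))
      (hk 0 τb).abs).trans hkK
  have hvc := exp_mul_norm_le_of_eq_add_integral hS hr (hduh r hr)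
    (h := fun s => (M * L + c * |k s|) * m s + c * F * ind s) (fun s hs => ?_)
    (hgm.add (hind.const_mul _))
  · rw [intervalIntegral.integral_add hgm (hind.const_mul _), intervalIntegral.integral_const_mul]
      at hvc
    have hhistK : c * F * ∫ s in 0..r, ind s ≤ c * F * K := by gcongr
    linarith
  · have hforcing := exp_mul_norm_forcing_le (k := k) (B := B) hG hG0 hL hω hs.1.le (hτ s hs.1.le) hF
      fun y hy => le_runningSup hφ hy.1 hy.2
    calc M * (exp (ω * s) * ‖G (U s) + k s • B (U (s - τ s))‖)
        ≤ M * ((L + ‖B‖ * exp (ω * τb) * |k s|) * m s + ‖B‖ * exp (ω * τb) * F * ind s) := by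
          gcongr
      _ = (M * L + c * |k s|) * m s + c * F * ind s := by ring

theorem stmt_11_general {H : Type*} [NormedAddCommGroup H] [NormedSpace ℝ H]
    (M ω τb K γ ω' L : ℝ) (hM : 1 ≤ M) (hω : 0 < ω) (hτb : 0 < τb)
    (hL0 : 0 ≤ L)
    (S : ℝ → H →L[ℝ] H) (hS : ∀ t ≥ (0:ℝ), ‖S t‖ ≤ M * Real.exp (-ω * t))
    (B : H →L[ℝ] H)
    (G : H → H) (hG : ∀ x y : H, ‖G x - G y‖ ≤ L * ‖x - y‖) (hG0 : G 0 = 0)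
    (k : ℝ → ℝ) (hk : ∀ a b : ℝ, IntervalIntegrable k volume a b)
    (hkK : ∀ t ≥ (0:ℝ), ∫ s in (t - τb)..t, |k s| ≤ K)
    (hlin : ∀ t ≥ (0:ℝ),
      M * ‖B‖ * Real.exp (ω * τb) * ∫ s in (0:ℝ)..t, |k s| ≤ γ + ω' * t)
    (τ : ℝ → ℝ) (hτrange : ∀ t ≥ (0:ℝ), τ t ∈ Icc (0:ℝ) τb)
    (f : ℝ → H) (hf : ContinuousOn f (Icc (-τb) (0:ℝ)))
    (U : ℝ → H) (hU : ContinuousOn U (Ici (-τb)))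
    (hhist : ∀ s ∈ Icc (-τb) (0:ℝ), U s = f s)
    (hduh : ∀ t ≥ (0:ℝ),
      U t = S t (f 0) +
        ∫ s in (0:ℝ)..t, (S (t - s)) (G (U s) + k s • B (U (s - τ s)))) :
    ∀ t ≥ (0:ℝ),
      ‖U t‖ ≤ M * Real.exp γ *
        (‖f 0‖ + Real.exp (ω * τb) * K * ‖B‖ *
          ⨆ s ∈ Icc (-τb) (0:ℝ), Real.exp (ω * s) * ‖f s‖) *
        Real.exp (-(ω - ω' - M * L) * t) := by
  intro t ht
  set F := ⨆ s ∈ Icc (-τb) (0:ℝ), exp (ω * s) * ‖f s‖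
  set φ : ℝ → ℝ := fun y => exp (ω * y) * ‖U y‖
  set g : ℝ → ℝ := fun s => M * L + M * ‖B‖ * exp (ω * τb) * |k s|
  set a := M * (‖f 0‖ + exp (ω * τb) * K * ‖B‖ * F)
  have hM0 : 0 ≤ M := zero_le_one.trans hM
  have hU0 : ContinuousOn U (Ici 0) := hU.mono (Ici_subset_Ici.2 (neg_nonpos.2 hτb.le))
  have hφ : ContinuousOn φ (Ici 0) := by fun_prop
  have hF : ∀ y ∈ Icc (-τb) 0, φ y ≤ F := fun y hy => by
    simp only [φ, hhist y hy]
    exact isCompact_Icc.le_biSup_of_continuousOn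
      ((by fun_prop : Continuous fun y => exp (ω * y)).continuousOn.mul hf.norm) hy
  have hgi : ∀ r, IntervalIntegrable g volume 0 r := fun r =>
    intervalIntegrable_const.add ((hk 0 r).abs.const_mul _)
  have hφle : ∀ r ≥ 0, φ r ≤ a + ∫ s in 0..r, g s * runningSup φ s := fun r hr =>
    exp_mul_norm_le_add_integral_runningSup hM0 hω.le hτb.le hL0 hS hG hG0 hk
      (by simpa using hkK τb hτb.le) hτrange hU0 hF hduh hr
  have ha : 0 ≤ a := (by positivity : 0 ≤ φ 0).trans (by simpa using hφle 0 le_rfl)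
  have hm := runningSup_le_mul_exp_integral ht hφ (by positivity) (fun s => by positivity) hgi hφle
  have hgt : ∫ s in 0..t, g s ≤ M * L * t + (γ + ω' * t) := by
    rw [intervalIntegral.integral_add intervalIntegrable_const ((hk 0 t).abs.const_mul _),
      intervalIntegral.integral_const, intervalIntegral.integral_const_mul, smul_eq_mul, sub_zero]
    linarith [hlin t ht]
  have hexp : exp (-(ω * t)) * exp (M * L * t + (γ + ω' * t)) =
      exp γ * exp (-(ω - ω' - M * L) * t) := by rw [← exp_add, ← exp_add]; ring_nf
  calc ‖U t‖ = exp (-(ω * t)) * φ t := by simp only [φ, ← mul_assoc, ← exp_add]; simp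
    _ ≤ exp (-(ω * t)) * (a * exp (M * L * t + (γ + ω' * t))) := by
        gcongr
        exact (le_runningSup hφ ht le_rfl).trans (hm.trans (by gcongr))
    _ = _ := by linear_combination a * hexp

/-- Exponential stability for the nonlinear delayed abstract problem. -/
theorem stmt_11 {H : Type*} [NormedAddCommGroup H] [NormedSpace ℝ H] [CompleteSpace H]
    (M ω τb K γ ω' L : ℝ) (hM : 1 ≤ M) (hω : 0 < ω) (hτb : 0 < τb) (hK : 0 < K)
    (hγ : 0 ≤ γ) (hω'0 : 0 ≤ ω') (hω' : ω' < ω) (hL0 : 0 ≤ L) (hL : L < (ω - ω') / M)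
    (S : ℝ → H →L[ℝ] H) (hS : ∀ t ≥ (0:ℝ), ‖S t‖ ≤ M * Real.exp (-ω * t))
    (B : H →L[ℝ] H)
    (G : H → H) (hG : ∀ x y : H, ‖G x - G y‖ ≤ L * ‖x - y‖) (hG0 : G 0 = 0)
    (k : ℝ → ℝ) (hk : ∀ a b : ℝ, IntervalIntegrable k volume a b)
    (hkK : ∀ t ≥ (0:ℝ), ∫ s in (t - τb)..t, |k s| ≤ K)
    (hlin : ∀ t ≥ (0:ℝ),
      M * ‖B‖ * Real.exp (ω * τb) * ∫ s in (0:ℝ)..t, |k s| ≤ γ + ω' * t)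
    (τ : ℝ → ℝ) (hτ : Continuous τ) (hτrange : ∀ t ≥ (0:ℝ), τ t ∈ Icc (0:ℝ) τb)
    (f : ℝ → H) (hf : ContinuousOn f (Icc (-τb) (0:ℝ)))
    (U : ℝ → H) (hU : ContinuousOn U (Ici (-τb)))
    (hhist : ∀ s ∈ Icc (-τb) (0:ℝ), U s = f s)
    (hduh : ∀ t ≥ (0:ℝ),
      U t = S t (f 0) +
        ∫ s in (0:ℝ)..t, (S (t - s)) (G (U s) + k s • B (U (s - τ s)))) :
    ∀ t ≥ (0:ℝ),
      ‖U t‖ ≤ M * Real.exp γ *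
        (‖f 0‖ + Real.exp (ω * τb) * K * ‖B‖ *
          ⨆ s ∈ Icc (-τb) (0:ℝ), Real.exp (ω * s) * ‖f s‖) *
        Real.exp (-(ω - ω' - M * L) * t) :=
  stmt_11_general M ω τb K γ ω' L hM hω hτb hL0 S hS B G hG hG0 k hk hkK hlin τ hτrange f hf U hU
    hhist hduh
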